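/- arXiv:1312.6147 — 2 statements merged into one kernel-verified Lean document; each statement's English description precedes it below -/
import Mathlib

section
/- Bihari's inequality: Let ρ : [0,∞) → [0,∞) be continuous, non-decreasing, and strictly positive on (0,∞). Fix x₀ > 0 and define G(x) := ∫_{x₀}^{x} 1/ρ(y) dy for x > 0. Let g, h, λ : [0,∞) → [0,∞) be continuous functions such that g(t) ≤ h(t) + ∫₀^t λ(s) ρ(g(s)) ds for all t ≥ 0, and set h*(t) := sup_{0 ≤ s ≤ t} h(s), assumed strictly positive. Then for every t ≥ 0 and every y > 0 satisfying G(h*(t)) + ∫₀^t λ(s) ds ≤ G(y), one has g(t) ≤ y (equivalently, g(t) ≤ G⁻¹(G(h*(t)) + ∫₀^t λ(s) ds) whenever this quantity lies in the range of G). -/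
/-!
Put `H = h*(T)` and `u t = H + ∫₀ᵗ λ ρ(g)`. Then `g ≤ u` on `[0, T]`, so `u' = λ ρ(g) ≤ λ ρ(u)`
by monotonicity of `ρ`, and since `G' = 1/ρ` the function `t ↦ G (u t) - ∫₀ᵗ λ` is
nonincreasing. Hence `G (u T) ≤ G H + ∫₀ᵀ λ ≤ G y`, and as `G` is strictly increasing,
`g T ≤ u T ≤ y`.
-/

open MeasureTheory Set intervalIntegral Filter Topology

theorem hasDerivAt_integral_of_continuousOn {E : Type*} [NormedAddCommGroup E] [NormedSpace ℝ E]
    [CompleteSpace E] {f : ℝ → E} {s : Set ℝ} {a b : ℝ}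
    (hf : ContinuousOn f s) (hs : MeasurableSet s) (hab : uIcc a b ⊆ s) (hb : s ∈ 𝓝 b) :
    HasDerivAt (fun x => ∫ y in a..x, f y) (f b) b := by
  refine integral_hasDerivAt_right ((hf.mono hab).intervalIntegrable) ?_ (hf.continuousAt hb)
  simpa [nhdsWithin_eq_nhds.mpr hb] using
    hf.stronglyMeasurableAtFilter_nhdsWithin hs b (μ := volume)

theorem hasDerivAt_of_eq_integral_one_div {ρ G : ℝ → ℝ} {x₀ : ℝ} (hρ_cont : ContinuousOn ρ (Ioi 0))
    (hρ_pos : ∀ y > 0, 0 < ρ y) (hx₀ : 0 < x₀) (hG : ∀ x > 0, G x = ∫ y in x₀..x, 1 / ρ y)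
    {x : ℝ} (hx : 0 < x) : HasDerivAt G (1 / ρ x) x := by
  have hinv : ContinuousOn (fun y => 1 / ρ y) (Ioi 0) :=
    continuousOn_const.div hρ_cont fun y hy => (hρ_pos y hy).ne'
  have hsub : uIcc x₀ x ⊆ Ioi 0 := fun y hy => lt_of_lt_of_le (lt_min hx₀ hx) hy.1
  refine (hasDerivAt_integral_of_continuousOn hinv measurableSet_Ioi hsub
    (Ioi_mem_nhds hx)).congr_of_eventuallyEq ?_
  filter_upwards [Ioi_mem_nhds hx] with z hz using hG z hz

theorem strictMonoOn_of_hasDerivAt_one_div {ρ G : ℝ → ℝ} (hρ_pos : ∀ y > 0, 0 < ρ y)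
    (hG : ∀ x > 0, HasDerivAt G (1 / ρ x) x) : StrictMonoOn G (Ioi 0) := by
  refine strictMonoOn_of_hasDerivWithinAt_pos (convex_Ioi 0) (f' := fun x => 1 / ρ x)
    (fun x hx => (hG x hx).continuousAt.continuousWithinAt) (fun x hx => ?_) (fun x hx => ?_)
  all_goals rw [interior_Ioi] at hx
  · exact (hG x hx).hasDerivWithinAt
  · exact one_div_pos.mpr (hρ_pos x hx)

theorem map_le_map_add_integral_of_hasDerivAt_le {G ρ u u' lam : ℝ → ℝ} {a b : ℝ} (hab : a ≤ b)
    (hG : ∀ x > 0, HasDerivAt G (1 / ρ x) x) (hρ_pos : ∀ y > 0, 0 < ρ y) (hlam : Continuous lam)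
    (hu : ContinuousOn u (Icc a b)) (hu_pos : ∀ t ∈ Icc a b, 0 < u t)
    (hu' : ∀ t ∈ Ioo a b, HasDerivAt u (u' t) t)
    (hu'_le : ∀ t ∈ Ioo a b, u' t ≤ lam t * ρ (u t)) :
    G (u b) ≤ G (u a) + ∫ s in a..b, lam s := by
  have hΨ : AntitoneOn (fun t => G (u t) - ∫ s in a..t, lam s) (Icc a b) := by
    refine antitoneOn_of_hasDerivWithinAt_nonpos (convex_Icc a b) ?_ (fun t ht => ?_)
      (fun t ht => ?_) (f' := fun t => 1 / ρ (u t) * u' t - lam t)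
    · refine ContinuousOn.sub (fun t ht => ?_)
        (continuous_primitive (fun _ _ => hlam.intervalIntegrable _ _) a).continuousOn
      exact (hG _ (hu_pos t ht)).continuousAt.comp_continuousWithinAt (hu t ht)
    · rw [interior_Icc] at ht
      exact (((hG _ (hu_pos t (Ioo_subset_Icc_self ht))).comp t (hu' t ht)).sub
        (hlam.integral_hasStrictDerivAt a t).hasDerivAt).hasDerivWithinAt
    · rw [interior_Icc] at ht
      have hρu := hρ_pos _ (hu_pos t (Ioo_subset_Icc_self ht))
      rw [sub_nonpos, one_div, inv_mul_le_iff₀ hρu, mul_comm]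
      exact hu'_le t ht
  have := hΨ ⟨le_rfl, hab⟩ ⟨hab, le_rfl⟩ hab
  simp only [integral_same, sub_zero] at this
  linarith

theorem add_integral_le_of_map_add_integral_le {G ρ F lam : ℝ → ℝ} {a b c y : ℝ} (hab : a ≤ b)
    (hc : 0 < c) (hy : 0 < y) (hG : ∀ x > 0, HasDerivAt G (1 / ρ x) x)
    (hρ_pos : ∀ y > 0, 0 < ρ y) (hlam : Continuous lam) (hF : ContinuousOn F (Icc a b))
    (hF_nonneg : ∀ t ∈ Icc a b, 0 ≤ F t)
    (hF_le : ∀ t ∈ Ioo a b, F t ≤ lam t * ρ (c + ∫ s in a..t, F s))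
    (hGy : G c + ∫ s in a..b, lam s ≤ G y) :
    c + ∫ s in a..b, F s ≤ y := by
  have hsub : ∀ t ∈ Icc a b, uIcc a t ⊆ Icc a b := fun t ht => by
    rw [uIcc_of_le ht.1]; exact Icc_subset_Icc_right ht.2
  have hu_pos : ∀ t ∈ Icc a b, 0 < c + ∫ s in a..t, F s := fun t ht =>
    add_pos_of_pos_of_nonneg hc
      (integral_nonneg ht.1 fun s hs => hF_nonneg s (hsub t ht (uIcc_of_le ht.1 ▸ hs)))
  have hG_u := map_le_map_add_integral_of_hasDerivAt_le (u := fun t => c + ∫ s in a..t, F s)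
    (u' := F) hab hG hρ_pos hlam
    (continuousOn_const.add (uIcc_of_le hab ▸ continuousOn_primitive_interval
      (uIcc_of_le hab ▸ hF.integrableOn_Icc)))
    hu_pos (fun t ht => (hasDerivAt_integral_of_continuousOn hF measurableSet_Icc
      (hsub t (Ioo_subset_Icc_self ht)) (Icc_mem_nhds ht.1 ht.2)).const_add c) hF_le
  rw [integral_same, add_zero] at hG_u
  exact ((strictMonoOn_of_hasDerivAt_one_div hρ_pos hG).le_iff_le (hu_pos b ⟨hab, le_rfl⟩) hy).mp
    (hG_u.trans hGy)

theorem bihari_inequality_general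
    (ρ g h lam : ℝ → ℝ)
    (hρ_cont : ContinuousOn ρ (Ici 0))
    (hρ_mono : MonotoneOn ρ (Ici 0))
    (hρ_nonneg : ∀ y ≥ (0:ℝ), 0 ≤ ρ y)
    (hρ_pos : ∀ y > (0:ℝ), 0 < ρ y)
    (x₀ : ℝ) (hx₀ : 0 < x₀)
    (G : ℝ → ℝ)
    (hG : ∀ x > (0:ℝ), G x = ∫ y in x₀..x, 1 / ρ y)
    (hg_cont : Continuous g) (hh_cont : Continuous h) (hlam_cont : Continuous lam)
    (hg_nonneg : ∀ t ≥ (0:ℝ), 0 ≤ g t)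
    (hlam_nonneg : ∀ t ≥ (0:ℝ), 0 ≤ lam t)
    (hineq : ∀ t ≥ (0:ℝ), g t ≤ h t + ∫ s in (0:ℝ)..t, lam s * ρ (g s))
    (hstar : ℝ → ℝ)
    (hhstar : ∀ t ≥ (0:ℝ), hstar t = sSup (h '' Icc 0 t))
    (hhstar_pos : ∀ t ≥ (0:ℝ), 0 < hstar t) :
    ∀ t ≥ (0:ℝ), ∀ y > (0:ℝ),
      G (hstar t) + (∫ s in (0:ℝ)..t, lam s) ≤ G y → g t ≤ y := by
  intro T hT y hy hGy
  have hG' : ∀ x > 0, HasDerivAt G (1 / ρ x) x := fun _ hx => hasDerivAt_of_eq_integral_one_div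
    (hρ_cont.mono Ioi_subset_Ici_self) hρ_pos hx₀ hG hx
  have hg_le : ∀ t ∈ Icc 0 T, g t ≤ hstar T + ∫ s in (0:ℝ)..t, lam s * ρ (g s) := fun t ht => by
    have hh : h t ≤ hstar T := hhstar T hT ▸
      le_csSup (isCompact_Icc.image hh_cont).bddAbove ⟨t, ht, rfl⟩
    linarith [hineq t ht.1]
  refine (hg_le T ⟨hT, le_rfl⟩).trans (add_integral_le_of_map_add_integral_le hT
    (hhstar_pos T hT) hy hG' hρ_pos hlam_cont
    (hlam_cont.continuousOn.mul (hρ_cont.comp hg_cont.continuousOn fun s hs => hg_nonneg s hs.1))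
    (fun s hs => mul_nonneg (hlam_nonneg s hs.1) (hρ_nonneg _ (hg_nonneg s hs.1)))
    (fun t ht => ?_) hGy)
  have hg_le_t := hg_le t (Ioo_subset_Icc_self ht)
  exact mul_le_mul_of_nonneg_left (hρ_mono (hg_nonneg t ht.1.le)
    ((hg_nonneg t ht.1.le).trans hg_le_t) hg_le_t) (hlam_nonneg t ht.1.le)

/-- **Bihari's inequality.** Let `ρ : [0,∞) → [0,∞)` be continuous, non-decreasing and
strictly positive on `(0,∞)`. Fix `x₀ > 0` and define `G x = ∫_{x₀}^{x} 1/ρ(y) dy` for `x > 0`.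
If continuous nonnegative functions `g, h, lam` satisfy
`g t ≤ h t + ∫₀ᵗ lam s * ρ (g s) ds` for all `t ≥ 0`, and `h* t := sup_{0 ≤ s ≤ t} h s > 0`,
then for every `t ≥ 0` and every `y > 0` with `G (h* t) + ∫₀ᵗ lam s ds ≤ G y`
one has `g t ≤ y`. -/
theorem bihari_inequality
    (ρ g h lam : ℝ → ℝ)
    (hρ_cont : ContinuousOn ρ (Ici 0))
    (hρ_mono : MonotoneOn ρ (Ici 0))
    (hρ_nonneg : ∀ y ≥ (0:ℝ), 0 ≤ ρ y)
    (hρ_pos : ∀ y > (0:ℝ), 0 < ρ y)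
    (x₀ : ℝ) (hx₀ : 0 < x₀)
    (G : ℝ → ℝ)
    (hG : ∀ x > (0:ℝ), G x = ∫ y in x₀..x, 1 / ρ y)
    (hg_cont : Continuous g) (hh_cont : Continuous h) (hlam_cont : Continuous lam)
    (hg_nonneg : ∀ t ≥ (0:ℝ), 0 ≤ g t)
    (hh_nonneg : ∀ t ≥ (0:ℝ), 0 ≤ h t)
    (hlam_nonneg : ∀ t ≥ (0:ℝ), 0 ≤ lam t)
    (hineq : ∀ t ≥ (0:ℝ), g t ≤ h t + ∫ s in (0:ℝ)..t, lam s * ρ (g s))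
    (hstar : ℝ → ℝ)
    (hhstar : ∀ t ≥ (0:ℝ), hstar t = sSup (h '' Icc 0 t))
    (hhstar_pos : ∀ t ≥ (0:ℝ), 0 < hstar t) :
    ∀ t ≥ (0:ℝ), ∀ y > (0:ℝ),
      G (hstar t) + (∫ s in (0:ℝ)..t, lam s) ≤ G y → g t ≤ y :=
  bihari_inequality_general ρ g h lam hρ_cont hρ_mono hρ_nonneg hρ_pos x₀ hx₀ G hG hg_cont hh_cont
    hlam_cont hg_nonneg hlam_nonneg hineq hstar hhstar hhstar_pos
end

section
/- For every Hurst parameter H ∈ (1/2, 1) and every T > 0, if ψ : [0,T] → ℝ is measurable with ∫₀^T |ψ(s)|^{1/H} ds < ∞ (i.e. ψ ∈ L^{1/H}([0,T])), then H(2H−1) ∫₀^T ∫₀^T |ψ(s)| |ψ(t)| |t−s|^{2H−2} ds dt < ∞ (i.e. ψ belongs to the space |𝓗|). -/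
open MeasureTheory Set ENNReal

/-!
This is the Hardy–Littlewood–Sobolev inequality for the kernel `|t - s| ^ (2H - 2)` at the
exponent `p = 1 / H`, proved by Lieb's layer-cake argument. Writing `f = ∫₀^∞ 𝟙{f > r} dr`, the
double integral becomes `∫∫ B(E_u, E_l) du dl` with `E_r = {f > r}` and
`B(A, B) = ∫_A ∫_B |t - s| ^ (2H - 2)`. A set of measure `a` sees at most `C a ^ γ` of the kernel,
`γ = 2H - 1 = 2 / p - 1`, so `B(E_u, E_l) ≤ C |E_max| |E_min| ^ γ`. Chebyshev's bound
`|E_l| ≤ ‖f‖_p^p l^(-p)` gives `∫₀^u |E_l| ^ γ dl ≲ u ^ (p - 1)`, and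
`∫₀^∞ |E_u| u ^ (p - 1) du = ‖f‖_p^p / p` by the layer-cake formula.
-/

lemma lintegral_Ioc_rpow {β a : ℝ} (hβ : -1 < β) (ha : 0 ≤ a) :
    ∫⁻ x in Ioc 0 a, ENNReal.ofReal (x ^ β) = ENNReal.ofReal (a ^ (β + 1) / (β + 1)) := by
  have hint : IntegrableOn (fun x : ℝ => x ^ β) (Ioc 0 a) :=
    (intervalIntegrable_iff_integrableOn_Ioc_of_le ha).1
      (intervalIntegral.intervalIntegrable_rpow' hβ)
  rw [← ofReal_integral_eq_lintegral_ofReal hint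
      (ae_restrict_of_forall_mem measurableSet_Ioc fun x hx => Real.rpow_nonneg hx.1.le β),
    ← intervalIntegral.integral_of_le ha, integral_rpow (Or.inl hβ),
    Real.zero_rpow (by linarith), sub_zero]

lemma lintegral_abs_sub_rpow_near_le {β : ℝ} (hβ : -1 < β) (t : ℝ) {a : ℝ} (ha : 0 ≤ a) :
    ∫⁻ s in Ico (t - a) t ∪ Ioc t (t + a), ENNReal.ofReal (|t - s| ^ β)
      ≤ 2 * ENNReal.ofReal (a ^ (β + 1) / (β + 1)) := by
  have hg : Measurable fun x : ℝ => ENNReal.ofReal (|x| ^ β) := by fun_prop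
  have hIoc : ∫⁻ x in Ioc 0 a, ENNReal.ofReal (|x| ^ β)
      = ENNReal.ofReal (a ^ (β + 1) / (β + 1)) := by
    rw [← lintegral_Ioc_rpow hβ ha]
    exact setLIntegral_congr_fun measurableSet_Ioc fun x hx => by rw [abs_of_pos hx.1]
  have hleft : ∫⁻ s in Ico (t - a) t, ENNReal.ofReal (|t - s| ^ β)
      = ENNReal.ofReal (a ^ (β + 1) / (β + 1)) := by
    have := (Measure.measurePreserving_sub_left volume t).setLIntegral_comp_preimage
      measurableSet_Ioc hg (s := Ioc 0 a)
    rwa [preimage_const_sub_Ioc, sub_zero, hIoc] at this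
  have hright : ∫⁻ s in Ioc t (t + a), ENNReal.ofReal (|t - s| ^ β)
      = ENNReal.ofReal (a ^ (β + 1) / (β + 1)) := by
    have := (measurePreserving_sub_right volume t).setLIntegral_comp_preimage
      measurableSet_Ioc hg (s := Ioc 0 a)
    rw [preimage_sub_const_Ioc, zero_add, add_comm a, hIoc] at this
    simpa only [abs_sub_comm] using this
  calc _ ≤ (∫⁻ s in Ico (t - a) t, ENNReal.ofReal (|t - s| ^ β))
        + ∫⁻ s in Ioc t (t + a), ENNReal.ofReal (|t - s| ^ β) := lintegral_union_le _ _ _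
    _ = _ := by rw [hleft, hright, two_mul]

lemma lintegral_abs_sub_rpow_le_of_volume_le {α : ℝ} (hα : -1 < α) (hα0 : α ≤ 0) (t : ℝ)
    {E : Set ℝ} {a : ℝ} (ha : 0 < a) (hE : volume E ≤ ENNReal.ofReal a) :
    ∫⁻ s in E, ENNReal.ofReal (|t - s| ^ α)
      ≤ ENNReal.ofReal (1 + 2 / (α + 1)) * ENNReal.ofReal (a ^ (α + 1)) := by
  set k : ℝ → ℝ≥0∞ := fun s => ENNReal.ofReal (|t - s| ^ α)
  set N := Ico (t - a) t ∪ Ioc t (t + a)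
  have hfar : ∀ s, s ≠ t → s ∉ N → a ≤ |t - s| := by
    intro s hst hsN
    by_contra h
    rcases abs_lt.1 (not_le.1 h) with ⟨h1, h2⟩
    rcases hst.lt_or_gt with hs | hs
    · exact hsN (Or.inl ⟨by linarith, hs⟩)
    · exact hsN (Or.inr ⟨hs, by linarith⟩)
  have hpt : ∀ s, s ≠ t → k s ≤ ENNReal.ofReal (a ^ α) + N.indicator k s := by
    intro s hst
    by_cases hsN : s ∈ N
    · rw [indicator_of_mem hsN]
      exact le_add_self
    · rw [indicator_of_notMem hsN, add_zero]
      exact ENNReal.ofReal_le_ofReal (Real.rpow_le_rpow_of_nonpos ha (hfar s hst hsN) hα0)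
  calc ∫⁻ s in E, k s
      ≤ ∫⁻ s in E, (ENNReal.ofReal (a ^ α) + N.indicator k s) :=
        lintegral_mono_ae (ae_restrict_of_ae ((Measure.ae_ne volume t).mono hpt))
    _ = ENNReal.ofReal (a ^ α) * volume E + ∫⁻ s in E, N.indicator k s := by
        rw [lintegral_add_left measurable_const, setLIntegral_const]
    _ ≤ ENNReal.ofReal (a ^ α) * ENNReal.ofReal a + ∫⁻ s in N, k s := by
        refine add_le_add (mul_le_mul_right hE _) ?_
        rw [← lintegral_indicator (measurableSet_Ico.union measurableSet_Ioc)]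
        exact setLIntegral_le_lintegral _ _
    _ ≤ ENNReal.ofReal (a ^ α) * ENNReal.ofReal a
          + 2 * ENNReal.ofReal (a ^ (α + 1) / (α + 1)) := by
        gcongr
        exact lintegral_abs_sub_rpow_near_le hα t ha.le
    _ = ENNReal.ofReal (1 + 2 / (α + 1)) * ENNReal.ofReal (a ^ (α + 1)) := by
        have hα1 : 0 < α + 1 := by linarith
        rw [← ENNReal.ofReal_mul (by positivity), ← Real.rpow_add_one ha.ne',
          ← ENNReal.ofReal_ofNat 2, ← ENNReal.ofReal_mul zero_le_two,
          ← ENNReal.ofReal_add (by positivity) (by positivity),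
          ← ENNReal.ofReal_mul (by positivity)]
        congr 1
        field_simp

lemma lintegral_abs_sub_rpow_le {α : ℝ} (hα : -1 < α) (hα0 : α ≤ 0) (t : ℝ) (E : Set ℝ) :
    ∫⁻ s in E, ENNReal.ofReal (|t - s| ^ α)
      ≤ ENNReal.ofReal (1 + 2 / (α + 1)) * volume E ^ (α + 1) := by
  have hα1 : 0 < α + 1 := by linarith
  rcases eq_or_ne (volume E) 0 with h0 | h0
  · simp [setLIntegral_measure_zero _ _ h0]
  rcases eq_or_ne (volume E) ⊤ with htop | htop
  · have hC : ENNReal.ofReal (1 + 2 / (α + 1)) ≠ 0 := by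
      rw [ENNReal.ofReal_ne_zero_iff]
      positivity
    simp [htop, top_rpow_of_pos hα1, mul_top hC]
  have ha := toReal_pos h0 htop
  have := lintegral_abs_sub_rpow_le_of_volume_le hα hα0 t ha (ofReal_toReal htop).ge
  rwa [← ofReal_rpow_of_pos ha, ofReal_toReal htop] at this

lemma lintegral_Ioi_lintegral_Ioi_le_two_mul {ν : Measure ℝ} [SFinite ν] {Φ : ℝ → ℝ → ℝ≥0∞}
    (hΦ : Measurable (Function.uncurry Φ)) (hsymm : ∀ x y, Φ x y = Φ y x) (a : ℝ) :
    ∫⁻ x in Ioi a, ∫⁻ y in Ioi a, Φ x y ∂ν ∂ν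
      ≤ 2 * ∫⁻ x in Ioi a, ∫⁻ y in Ioc a x, Φ x y ∂ν ∂ν := by
  set Ψ : ℝ → ℝ → ℝ≥0∞ := fun x y => (Ioi x).indicator (Φ x) y
  have hΨ : Measurable (Function.uncurry Ψ) := by
    have : Function.uncurry Ψ = {p : ℝ × ℝ | p.1 < p.2}.indicator (Function.uncurry Φ) := by
      ext ⟨x, y⟩
      by_cases h : x < y <;> simp [Ψ, indicator, h]
    rw [this]
    exact hΦ.indicator (measurableSet_lt measurable_fst measurable_snd)
  have hsplit : ∀ x ∈ Ioi a, ∫⁻ y in Ioi a, Φ x y ∂ν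
      = ∫⁻ y in Ioc a x, Φ x y ∂ν + ∫⁻ y in Ioi a, Ψ x y ∂ν := by
    intro x hx
    rw [lintegral_indicator measurableSet_Ioi, Measure.restrict_restrict measurableSet_Ioi,
      inter_eq_left.2 (Ioi_subset_Ioi (le_of_lt hx)),
      ← lintegral_union measurableSet_Ioi (Ioc_disjoint_Ioi le_rfl),
      Ioc_union_Ioi_eq_Ioi (le_of_lt hx)]
  have hreflect : ∫⁻ x in Ioi a, ∫⁻ y in Ioi a, Ψ x y ∂ν ∂ν
      ≤ ∫⁻ y in Ioi a, ∫⁻ x in Ioc a y, Φ y x ∂ν ∂ν := by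
    rw [lintegral_lintegral_swap hΨ.aemeasurable]
    refine lintegral_mono fun y => ?_
    have : ∀ x, Ψ x y = (Iio y).indicator (Φ y) x := by
      intro x
      by_cases h : x < y <;> simp [Ψ, indicator, h, hsymm x y]
    simp_rw [this]
    rw [lintegral_indicator measurableSet_Iio, Measure.restrict_restrict measurableSet_Iio]
    exact lintegral_mono_set fun x hx => ⟨hx.2, le_of_lt hx.1⟩
  calc ∫⁻ x in Ioi a, ∫⁻ y in Ioi a, Φ x y ∂ν ∂ν
      = ∫⁻ x in Ioi a, (∫⁻ y in Ioc a x, Φ x y ∂ν + ∫⁻ y in Ioi a, Ψ x y ∂ν) ∂ν :=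
        setLIntegral_congr_fun measurableSet_Ioi hsplit
    _ = ∫⁻ x in Ioi a, ∫⁻ y in Ioc a x, Φ x y ∂ν ∂ν
          + ∫⁻ x in Ioi a, ∫⁻ y in Ioi a, Ψ x y ∂ν ∂ν :=
        lintegral_add_right _ hΨ.lintegral_prod_right'
    _ ≤ 2 * ∫⁻ x in Ioi a, ∫⁻ y in Ioc a x, Φ x y ∂ν ∂ν := by
        rw [two_mul]
        gcongr

section LayerCake

variable {X : Type*} [MeasurableSpace X] {μ : Measure X} {f : X → ℝ}

lemma lintegral_mul_ofReal_eq_lintegral_setLIntegral_lt (hf : Measurable f) (hf0 : 0 ≤ f)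
    {g : X → ℝ≥0∞} (hg : Measurable g) :
    ∫⁻ x, g x * ENNReal.ofReal (f x) ∂μ = ∫⁻ r in Ioi 0, ∫⁻ x in {x | r < f x}, g x ∂μ := by
  have := lintegral_eq_lintegral_meas_lt (μ.withDensity g) (ae_of_all _ hf0) hf.aemeasurable
  rw [lintegral_withDensity_eq_lintegral_mul _ hg hf.ennreal_ofReal] at this
  simpa only [Pi.mul_apply, withDensity_apply _ (measurableSet_lt measurable_const hf)] using this

lemma measurable_setLIntegral_lt [SFinite μ] (hf : Measurable f) {K : X → X → ℝ≥0∞}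
    (hK : Measurable (Function.uncurry K)) :
    Measurable fun p : X × ℝ => ∫⁻ s in {x | p.2 < f x}, K p.1 s ∂μ := by
  have hind : Measurable fun q : (X × ℝ) × X => {x | q.1.2 < f x}.indicator (K q.1.1) q.2 := by
    have : (fun q : (X × ℝ) × X => {x | q.1.2 < f x}.indicator (K q.1.1) q.2) =
        {q : (X × ℝ) × X | q.1.2 < f q.2}.indicator fun q => K q.1.1 q.2 := by
      ext q
      by_cases h : q.1.2 < f q.2 <;> simp [indicator, h]
    rw [this]
    exact (hK.comp (measurable_fst.fst.prodMk measurable_snd)).indicator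
      (measurableSet_lt measurable_fst.snd (hf.comp measurable_snd))
  simp_rw [← lintegral_indicator (measurableSet_lt measurable_const hf)]
  exact hind.lintegral_prod_right'

lemma lintegral_lintegral_mul_eq_lintegral_setLIntegral_lt [SFinite μ] (hf : Measurable f)
    (hf0 : 0 ≤ f) {K : X → X → ℝ≥0∞} (hK : Measurable (Function.uncurry K)) :
    ∫⁻ t, ∫⁻ s, ENNReal.ofReal (f s) * ENNReal.ofReal (f t) * K t s ∂μ ∂μ
      = ∫⁻ u in Ioi 0, ∫⁻ l in Ioi 0,
          ∫⁻ t in {x | u < f x}, ∫⁻ s in {x | l < f x}, K t s ∂μ ∂μ := by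
  have hF := measurable_setLIntegral_lt (μ := μ) hf hK
  have hinner : ∀ t, ∫⁻ s, ENNReal.ofReal (f s) * ENNReal.ofReal (f t) * K t s ∂μ
      = (∫⁻ l in Ioi 0, ∫⁻ s in {x | l < f x}, K t s ∂μ) * ENNReal.ofReal (f t) := by
    intro t
    have hKt : Measurable (K t) := hK.comp measurable_prodMk_left
    rw [← lintegral_mul_ofReal_eq_lintegral_setLIntegral_lt hf hf0 hKt,
      ← lintegral_mul_const' _ _ ofReal_ne_top]
    congr 1 with s
    ring
  simp_rw [hinner]
  rw [lintegral_mul_ofReal_eq_lintegral_setLIntegral_lt hf hf0 hF.lintegral_prod_right']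
  exact lintegral_congr fun u => lintegral_lintegral_swap hF.aemeasurable

end LayerCake

section Superlevel

variable {X : Type*} [MeasurableSpace X] {μ : Measure X} {f : X → ℝ}

lemma measure_lt_le_lintegral_rpow_mul (hf : Measurable f) {p r : ℝ} (hp : 0 < p) (hr : 0 < r) :
    μ {x | r < f x} ≤ (∫⁻ x, ENNReal.ofReal (f x ^ p) ∂μ) * ENNReal.ofReal (r ^ (-p)) := by
  have hrp : 0 < r ^ p := Real.rpow_pos_of_pos hr p
  calc μ {x | r < f x} ≤ μ {x | ENNReal.ofReal (r ^ p) ≤ ENNReal.ofReal (f x ^ p)} :=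
        measure_mono fun x hx =>
          ENNReal.ofReal_le_ofReal (Real.rpow_le_rpow hr.le (le_of_lt hx) hp.le)
    _ ≤ (∫⁻ x, ENNReal.ofReal (f x ^ p) ∂μ) / ENNReal.ofReal (r ^ p) :=
        meas_ge_le_lintegral_div (by fun_prop) (by simpa using hrp) ofReal_ne_top
    _ = (∫⁻ x, ENNReal.ofReal (f x ^ p) ∂μ) * ENNReal.ofReal (r ^ (-p)) := by
        rw [div_eq_mul_inv, ← ofReal_inv_of_pos hrp, Real.rpow_neg hr.le]

lemma lintegral_Ioc_measure_lt_rpow_le (hf : Measurable f) {p : ℝ} (hp1 : 1 < p) (hp2 : p ≤ 2)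
    {u : ℝ} (hu : 0 ≤ u) :
    ∫⁻ l in Ioc 0 u, μ {x | l < f x} ^ (2 / p - 1)
      ≤ (∫⁻ x, ENNReal.ofReal (f x ^ p) ∂μ) ^ (2 / p - 1)
          * ENNReal.ofReal (u ^ (p - 1) / (p - 1)) := by
  set N := ∫⁻ x, ENNReal.ofReal (f x ^ p) ∂μ
  have hp0 : 0 < p := by linarith
  have hγ : 0 ≤ 2 / p - 1 := by rw [sub_nonneg, le_div_iff₀ hp0]; linarith
  have hpt : ∀ l ∈ Ioc (0 : ℝ) u,
      μ {x | l < f x} ^ (2 / p - 1) ≤ N ^ (2 / p - 1) * ENNReal.ofReal (l ^ (p - 2)) := by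
    intro l hl
    calc μ {x | l < f x} ^ (2 / p - 1) ≤ (N * ENNReal.ofReal (l ^ (-p))) ^ (2 / p - 1) :=
          rpow_le_rpow (measure_lt_le_lintegral_rpow_mul hf hp0 hl.1) hγ
      _ = N ^ (2 / p - 1) * ENNReal.ofReal (l ^ (p - 2)) := by
          rw [mul_rpow_of_nonneg _ _ hγ, ofReal_rpow_of_nonneg (Real.rpow_nonneg hl.1.le _) hγ,
            ← Real.rpow_mul hl.1.le]
          congr 3
          field_simp
          ring
  calc ∫⁻ l in Ioc 0 u, μ {x | l < f x} ^ (2 / p - 1)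
      ≤ ∫⁻ l in Ioc 0 u, N ^ (2 / p - 1) * ENNReal.ofReal (l ^ (p - 2)) :=
        setLIntegral_mono (by fun_prop) hpt
    _ = N ^ (2 / p - 1) * ENNReal.ofReal (u ^ (p - 1) / (p - 1)) := by
        rw [lintegral_const_mul _ (by fun_prop), lintegral_Ioc_rpow (by linarith) hu]
        ring_nf

lemma lintegral_Ioi_measure_lt_mul_lintegral_Ioc_lt_top (hf : Measurable f) (hf0 : 0 ≤ f)
    {p : ℝ} (hp1 : 1 < p) (hp2 : p ≤ 2) (hfp : ∫⁻ x, ENNReal.ofReal (f x ^ p) ∂μ ≠ ⊤) :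
    ∫⁻ u in Ioi 0, μ {x | u < f x} * ∫⁻ l in Ioc 0 u, μ {x | l < f x} ^ (2 / p - 1) < ⊤ := by
  have hp0 : 0 < p := by linarith
  have hcake := lintegral_rpow_eq_lintegral_meas_lt_mul μ (ae_of_all μ hf0) hf.aemeasurable hp0
  have htail : ∫⁻ u in Ioi 0, μ {x | u < f x} * ENNReal.ofReal (u ^ (p - 1)) ≠ ⊤ := by
    intro htop
    rw [htop, mul_top (by simpa using hp0)] at hcake
    exact hfp hcake
  set c := (∫⁻ x, ENNReal.ofReal (f x ^ p) ∂μ) ^ (2 / p - 1) * ENNReal.ofReal (p - 1)⁻¹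
  have hc : c ≠ ⊤ := mul_ne_top (rpow_ne_top_of_nonneg
    (by rw [sub_nonneg, le_div_iff₀ hp0]; linarith) hfp) ofReal_ne_top
  calc ∫⁻ u in Ioi 0, μ {x | u < f x} * ∫⁻ l in Ioc 0 u, μ {x | l < f x} ^ (2 / p - 1)
      ≤ ∫⁻ u in Ioi 0, c * (μ {x | u < f x} * ENNReal.ofReal (u ^ (p - 1))) := by
        refine setLIntegral_mono' measurableSet_Ioi fun u hu => ?_
        refine (mul_le_mul_right
          (lintegral_Ioc_measure_lt_rpow_le hf hp1 hp2 (le_of_lt hu)) _).trans_eq ?_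
        rw [div_eq_mul_inv (u ^ (p - 1)), ofReal_mul (Real.rpow_nonneg (le_of_lt hu) _)]
        ring
    _ = c * ∫⁻ u in Ioi 0, μ {x | u < f x} * ENNReal.ofReal (u ^ (p - 1)) :=
        lintegral_const_mul' _ _ hc
    _ < ⊤ := mul_lt_top hc.lt_top htail.lt_top

end Superlevel

section Kernel

variable {X : Type*} [MeasurableSpace X] {μ : Measure X} {K : X → X → ℝ≥0∞} {C : ℝ≥0∞} {γ : ℝ}

lemma setLIntegral_setLIntegral_le_of_setLIntegral_le
    (hKE : ∀ t E, MeasurableSet E → ∫⁻ s in E, K t s ∂μ ≤ C * μ E ^ γ)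
    (A : Set X) {B : Set X} (hB : MeasurableSet B) :
    ∫⁻ t in A, ∫⁻ s in B, K t s ∂μ ∂μ ≤ C * μ A * μ B ^ γ :=
  calc ∫⁻ t in A, ∫⁻ s in B, K t s ∂μ ∂μ ≤ ∫⁻ _ in A, C * μ B ^ γ ∂μ :=
        lintegral_mono fun t => hKE t B hB
    _ = C * μ A * μ B ^ γ := by rw [setLIntegral_const, mul_right_comm]

lemma setLIntegral_setLIntegral_le_of_setLIntegral_le_of_symm [SFinite μ]
    (hK : Measurable (Function.uncurry K)) (hKsymm : ∀ t s, K t s = K s t)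
    (hKE : ∀ t E, MeasurableSet E → ∫⁻ s in E, K t s ∂μ ≤ C * μ E ^ γ)
    {A : Set X} (hA : MeasurableSet A) (B : Set X) :
    ∫⁻ t in A, ∫⁻ s in B, K t s ∂μ ∂μ ≤ C * μ B * μ A ^ γ := by
  rw [lintegral_lintegral_swap hK.aemeasurable]
  simp_rw [hKsymm _ _]
  exact setLIntegral_setLIntegral_le_of_setLIntegral_le hKE B hA

lemma setLIntegral_setLIntegral_lt_le [SFinite μ]
    (hK : Measurable (Function.uncurry K)) (hKsymm : ∀ t s, K t s = K s t)
    (hKE : ∀ t E, MeasurableSet E → ∫⁻ s in E, K t s ∂μ ≤ C * μ E ^ γ)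
    {f : X → ℝ} (hf : Measurable f) (u l : ℝ) :
    ∫⁻ t in {x | u < f x}, ∫⁻ s in {x | l < f x}, K t s ∂μ ∂μ
      ≤ C * μ {x | max u l < f x} * μ {x | min u l < f x} ^ γ := by
  rcases le_total u l with h | h
  · rw [max_eq_right h, min_eq_left h]
    exact setLIntegral_setLIntegral_le_of_setLIntegral_le_of_symm hK hKsymm hKE
      (measurableSet_lt measurable_const hf) _
  · rw [max_eq_left h, min_eq_right h]
    exact setLIntegral_setLIntegral_le_of_setLIntegral_le hKE _
      (measurableSet_lt measurable_const hf)

end Kernel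

theorem lintegral_lintegral_mul_lt_top_of_setLIntegral_le {X : Type*} [MeasurableSpace X]
    {μ : Measure X} [SFinite μ] {K : X → X → ℝ≥0∞} (hK : Measurable (Function.uncurry K))
    (hKsymm : ∀ t s, K t s = K s t) {C : ℝ≥0∞} (hC : C ≠ ⊤) {p : ℝ} (hp1 : 1 < p) (hp2 : p ≤ 2)
    (hKE : ∀ t E, MeasurableSet E → ∫⁻ s in E, K t s ∂μ ≤ C * μ E ^ (2 / p - 1))
    {f : X → ℝ} (hf : Measurable f) (hf0 : 0 ≤ f)
    (hfp : ∫⁻ x, ENNReal.ofReal (f x ^ p) ∂μ ≠ ⊤) :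
    ∫⁻ t, ∫⁻ s, ENNReal.ofReal (f s) * ENNReal.ofReal (f t) * K t s ∂μ ∂μ < ⊤ := by
  set m : ℝ → ℝ≥0∞ := fun r => μ {x | r < f x}
  have hm : Measurable m :=
    Antitone.measurable fun r r' h => measure_mono fun x hx => h.trans_lt hx
  set Φ : ℝ → ℝ → ℝ≥0∞ := fun u l => C * m (max u l) * m (min u l) ^ (2 / p - 1)
  have hΦ : Measurable (Function.uncurry Φ) :=
    (measurable_const.mul (hm.comp (measurable_fst.max measurable_snd))).mul
      ((hm.comp (measurable_fst.min measurable_snd)).pow_const _)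
  have hΦsymm : ∀ u l, Φ u l = Φ l u := fun u l => by simp only [Φ, max_comm, min_comm]
  have hΦIoc : ∀ u, ∫⁻ l in Ioc 0 u, Φ u l = C * (m u * ∫⁻ l in Ioc 0 u, m l ^ (2 / p - 1)) := by
    intro u
    rw [← mul_assoc, ← lintegral_const_mul _ (hm.pow_const _)]
    exact setLIntegral_congr_fun measurableSet_Ioc fun l hl => by
      simp only [Φ, max_eq_left hl.2, min_eq_right hl.2]
  calc ∫⁻ t, ∫⁻ s, ENNReal.ofReal (f s) * ENNReal.ofReal (f t) * K t s ∂μ ∂μ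
      = ∫⁻ u in Ioi 0, ∫⁻ l in Ioi 0,
          ∫⁻ t in {x | u < f x}, ∫⁻ s in {x | l < f x}, K t s ∂μ ∂μ :=
        lintegral_lintegral_mul_eq_lintegral_setLIntegral_lt hf hf0 hK
    _ ≤ ∫⁻ u in Ioi 0, ∫⁻ l in Ioi 0, Φ u l :=
        lintegral_mono fun u => lintegral_mono fun l =>
          setLIntegral_setLIntegral_lt_le hK hKsymm hKE hf u l
    _ ≤ 2 * ∫⁻ u in Ioi 0, ∫⁻ l in Ioc 0 u, Φ u l :=
        lintegral_Ioi_lintegral_Ioi_le_two_mul hΦ hΦsymm 0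
    _ = 2 * C * ∫⁻ u in Ioi 0, m u * ∫⁻ l in Ioc 0 u, m l ^ (2 / p - 1) := by
        simp_rw [hΦIoc]
        rw [lintegral_const_mul' _ _ hC, mul_assoc]
    _ < ⊤ := mul_lt_top (mul_lt_top (by simp) hC.lt_top)
        (lintegral_Ioi_measure_lt_mul_lintegral_Ioc_lt_top hf hf0 hp1 hp2 hfp)

theorem Lp_one_div_H_subset_absH_general
    (H T : ℝ) (hH : H ∈ Set.Ioo (1/2 : ℝ) 1)
    (ψ : ℝ → ℝ) (hψ : Measurable ψ)
    (hLp : (∫⁻ s in Icc (0:ℝ) T, ENNReal.ofReal (|ψ s| ^ (1 / H))) < ⊤) :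
    ENNReal.ofReal (H * (2 * H - 1)) *
        (∫⁻ t in Icc (0:ℝ) T, ∫⁻ s in Icc (0:ℝ) T,
          ENNReal.ofReal (|ψ s| * |ψ t| * |t - s| ^ (2 * H - 2))) < ⊤ := by
  obtain ⟨hH1, hH2⟩ := hH
  have hH0 : 0 < H := by linarith
  have hexp : 2 / (1 / H) - 1 = 2 * H - 2 + 1 := by field_simp; ring
  have hKE : ∀ t E, MeasurableSet E →
      ∫⁻ s in E, ENNReal.ofReal (|t - s| ^ (2 * H - 2)) ∂volume.restrict (Icc 0 T)
        ≤ ENNReal.ofReal (1 + 2 / (2 * H - 2 + 1))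
          * volume.restrict (Icc 0 T) E ^ (2 / (1 / H) - 1) := by
    intro t E hE
    rw [Measure.restrict_restrict hE, Measure.restrict_apply hE, hexp]
    exact lintegral_abs_sub_rpow_le (by linarith) (by linarith) t _
  have hfinite := lintegral_lintegral_mul_lt_top_of_setLIntegral_le
    (K := fun t s => ENNReal.ofReal (|t - s| ^ (2 * H - 2))) (by fun_prop)
    (fun t s => by rw [abs_sub_comm]) ofReal_ne_top
    (by rw [lt_div_iff₀ hH0]; linarith) (by rw [div_le_iff₀ hH0]; linarith) hKE
    hψ.abs (fun x => abs_nonneg _) hLp.ne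
  refine mul_lt_top ofReal_lt_top (lt_of_eq_of_lt (lintegral_congr fun t =>
    lintegral_congr fun s => ?_) hfinite)
  rw [ENNReal.ofReal_mul (by positivity), ENNReal.ofReal_mul (abs_nonneg _)]

/-- For every Hurst parameter `H ∈ (1/2, 1)` and every `T > 0`, if `ψ : [0,T] → ℝ` is
measurable with `∫₀ᵀ |ψ s|^{1/H} ds < ∞` (i.e. `ψ ∈ L^{1/H}([0,T])`), then
`H(2H−1) ∫₀ᵀ ∫₀ᵀ |ψ s| |ψ t| |t−s|^{2H−2} ds dt < ∞`, i.e. `ψ` lies in the space `|𝓗|`. -/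
theorem Lp_one_div_H_subset_absH
    (H T : ℝ) (hH : H ∈ Set.Ioo (1/2 : ℝ) 1) (hT : 0 < T)
    (ψ : ℝ → ℝ) (hψ : Measurable ψ)
    (hLp : (∫⁻ s in Icc (0:ℝ) T, ENNReal.ofReal (|ψ s| ^ (1 / H))) < ⊤) :
    ENNReal.ofReal (H * (2 * H - 1)) *
        (∫⁻ t in Icc (0:ℝ) T, ∫⁻ s in Icc (0:ℝ) T,
          ENNReal.ofReal (|ψ s| * |ψ t| * |t - s| ^ (2 * H - 2))) < ⊤ :=
  Lp_one_div_H_subset_absH_general H T hH ψ hψ hLp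
end
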